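/- arXiv:1610.05137 — 3 statements merged into one kernel-verified Lean document; each statement's English description precedes it below -/
import Mathlib

section
/- Let L be a finite meet-semidistributive lattice. Then the canonical meet complex of L is flag if and only if L is semidistributive (that is, L is also join-semidistributive). -/
/-!
For a meet-irreducible `m` with unique upper cover `m*`, let `κ(m)` be the least element of
`{x | x ≤ m*, ¬ x ≤ m}`. In a finite lattice, join-semidistributivity says exactly that `κ(m)`
exists for every meet-irreducible `m`. In a meet-semidistributive lattice the canonical meet
representation of `w` consists of the largest `x` with `x ⊓ u = w`, one for each upper cover `u`
of `w`, and `m` is such a canonical meetand of `w` as soon as `m ⊓ (k ⊔ w) = w` for a minimal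
element `k` of the set above.

If every `κ(m)` exists and all pairs of `F` are faces, then `κ(m)` lies below every other member
of `F`, so each `m ∈ F` is the canonical meetand of `⋀ F` for the cover `κ(m) ⊔ ⋀ F`, and `F` is
a face. Conversely, two distinct minimal elements `k₁, k₂` of that set would make `m` together
with the canonical meetands of `k₁ ⊓ k₂` not above `m` a set whose pairs are all faces but which
is not the canonical meet representation of `k₁ ⊓ k₂`.
-/

universe u v

def JoinSemidistrib (α : Type*) [Lattice α] : Prop :=
  ∀ x y z : α, x ⊔ y = x ⊔ z → x ⊔ (y ⊓ z) = x ⊔ y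

def MeetSemidistrib (α : Type*) [Lattice α] : Prop :=
  ∀ x y z : α, x ⊓ y = x ⊓ z → x ⊓ (y ⊔ z) = x ⊓ y

section JoinDefs

variable {α : Type*} [Lattice α] [OrderBot α]

/-- `j` is join-irreducible: not the bottom element, and `j = a ⊔ b` implies `j = a` or `j = b`. -/
def JoinIrred (j : α) : Prop :=
  j ≠ ⊥ ∧ ∀ a b : α, j = a ⊔ b → j = a ∨ j = b

/-- `A` join-refines `B`: every element of `A` is below some element of `B`. -/
def JoinRefines (A B : Finset α) : Prop :=
  ∀ a ∈ A, ∃ b ∈ B, a ≤ b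

/-- `A` is an irredundant join representation of `w`. -/
def IrredJoinRep (A : Finset α) (w : α) : Prop :=
  A.sup id = w ∧ ∀ A' ⊂ A, A'.sup id < w

/-- `A` is the canonical join representation of `w`: the irredundant join representation
of `w` that join-refines every irredundant join representation of `w`. -/
def CanonicalJoinRep (A : Finset α) (w : α) : Prop :=
  IrredJoinRep A w ∧ ∀ B : Finset α, IrredJoinRep B w → JoinRefines A B

/-- `A` joins canonically, i.e. `A` is a face of the canonical join complex. -/
def JoinsCanonically (A : Finset α) : Prop :=
  CanonicalJoinRep A (A.sup id)

/-- `j` is a canonical joinand of `w`. -/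
def CanonicalJoinand (j w : α) : Prop :=
  ∃ A : Finset α, CanonicalJoinRep A w ∧ j ∈ A

end JoinDefs

/-- The canonical join complex is flag: any finite set of join-irreducible elements all of
whose two-element subsets are faces is itself a face. -/
def FlagCanonicalJoinComplex (α : Type*) [Lattice α] [OrderBot α] [DecidableEq α] : Prop :=
  ∀ F : Finset α, (∀ j ∈ F, JoinIrred j) →
    (∀ j ∈ F, ∀ j' ∈ F, j ≠ j' → JoinsCanonically ({j, j'} : Finset α)) →
    JoinsCanonically F

/-- A lattice is crosscut-simplicial if for every `x ≤ y` and every proper subset `S` of the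
set of atoms of the interval `[x, y]` (elements `a` with `x ⋖ a` and `a ≤ y`), the join of `x`
with all elements of `S` is strictly less than `y`. -/
def CrosscutSimplicial (β : Type*) [Lattice β] : Prop :=
  ∀ x y : β, x ≤ y → ∀ S : Finset β,
    (∀ a ∈ S, x ⋖ a ∧ a ≤ y) →
    (∃ a : β, (x ⋖ a ∧ a ≤ y) ∧ a ∉ S) →
    S.fold (· ⊔ · : β → β → β) x id < y

section MeetDefs

variable {α : Type*} [Lattice α] [OrderTop α]

/-- `m` is meet-irreducible: not the top element, and `m = a ⊓ b` implies `m = a` or `m = b`. -/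
def MeetIrred (m : α) : Prop :=
  m ≠ ⊤ ∧ ∀ a b : α, m = a ⊓ b → m = a ∨ m = b

/-- `A` meet-refines `B`: every element of `A` is above some element of `B`. -/
def MeetRefines (A B : Finset α) : Prop :=
  ∀ a ∈ A, ∃ b ∈ B, b ≤ a

/-- `A` is an irredundant meet representation of `w`. -/
def IrredMeetRep (A : Finset α) (w : α) : Prop :=
  A.inf id = w ∧ ∀ A' ⊂ A, w < A'.inf id

/-- `A` is the canonical meet representation of `w`. -/
def CanonicalMeetRep (A : Finset α) (w : α) : Prop :=
  IrredMeetRep A w ∧ ∀ B : Finset α, IrredMeetRep B w → MeetRefines A B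

/-- `A` meets canonically, i.e. `A` is a face of the canonical meet complex. -/
def MeetsCanonically (A : Finset α) : Prop :=
  CanonicalMeetRep A (A.inf id)

end MeetDefs

/-- The canonical meet complex is flag. -/
def FlagCanonicalMeetComplex (α : Type*) [Lattice α] [OrderTop α] [DecidableEq α] : Prop :=
  ∀ F : Finset α, (∀ m ∈ F, MeetIrred m) →
    (∀ m ∈ F, ∀ m' ∈ F, m ≠ m' → MeetsCanonically ({m, m'} : Finset α)) →
    MeetsCanonically F

open Finset

section IrredundantMeet

variable {α : Type*} [Lattice α] [OrderTop α] [DecidableEq α] {A B D : Finset α} {w : α}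

theorem inf_id_eq_inf_inf_erase {a : α} (ha : a ∈ A) : A.inf id = a ⊓ (A.erase a).inf id :=
  (congrArg (·.inf id) (insert_erase ha)).symm.trans inf_insert

theorem irredMeetRep_iff :
    IrredMeetRep A w ↔ A.inf id = w ∧ ∀ a ∈ A, w < (A.erase a).inf id := by
  refine ⟨fun h => ⟨h.1, fun a ha => h.2 _ (erase_ssubset ha)⟩, fun h => ⟨h.1, fun A' hA' => ?_⟩⟩
  obtain ⟨a, ha, haA'⟩ := exists_of_ssubset hA'
  exact (h.2 a ha).trans_le (inf_mono (subset_erase.2 ⟨hA'.subset, haA'⟩))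

theorem IrredMeetRep.eq_of_le (h : IrredMeetRep A w) {a b : α} (ha : a ∈ A) (hb : b ∈ A)
    (hab : a ≤ b) : a = b := by
  by_contra hne
  have hle : (A.erase b).inf id ≤ b := (inf_le (mem_erase.2 ⟨hne, ha⟩)).trans hab
  have hw : (A.erase b).inf id = w := by
    rw [← h.1, inf_id_eq_inf_inf_erase hb, inf_eq_right.2 hle]
  exact (((irredMeetRep_iff.1 h).2 b hb).trans_eq hw).false

theorem IrredMeetRep.eq_of_subset (h : IrredMeetRep A w) (hD : D ⊆ A) (hDw : D.inf id = w) :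
    D = A := by
  refine hD.antisymm fun a ha => ?_
  by_contra haD
  exact ((irredMeetRep_iff.1 h).2 a ha).not_ge
    (hDw ▸ inf_mono (subset_erase.2 ⟨hD, haD⟩))

theorem IrredMeetRep.subset (h : IrredMeetRep A w) (hD : D ⊆ A) : IrredMeetRep D (D.inf id) := by
  refine irredMeetRep_iff.2 ⟨rfl, fun d hd => lt_of_le_of_ne (inf_mono (erase_subset d D)) ?_⟩
  intro heq
  refine ((irredMeetRep_iff.1 h).2 d (hD hd)).not_ge ?_
  calc (A.erase d).inf id ≤ (D.erase d).inf id ⊓ (A \ D).inf id :=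
        le_inf (inf_mono (erase_subset_erase d hD))
          (inf_mono fun x hx => mem_erase.2 ⟨fun hxd => (mem_sdiff.1 hx).2 (hxd ▸ hd),
            (mem_sdiff.1 hx).1⟩)
    _ = (D ∪ A \ D).inf id := by rw [inf_union, heq]
    _ = w := by rw [union_sdiff_of_subset hD, h.1]

theorem CanonicalMeetRep.unique (hA : CanonicalMeetRep A w) (hB : CanonicalMeetRep B w) :
    A = B := by
  refine hB.1.eq_of_subset (fun a ha => ?_) hA.1.1
  obtain ⟨b, hb, hba⟩ := hA.2 B hB.1 a ha
  obtain ⟨a', ha', ha'b⟩ := hB.2 A hA.1 b hb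
  obtain rfl : a' = a := hA.1.eq_of_le ha' ha (ha'b.trans hba)
  exact le_antisymm hba ha'b ▸ hb

end IrredundantMeet

section LatticeLemmas

variable {α : Type*} [Lattice α] {w u x : α}

theorem CovBy.inf_eq_or_le (h : w ⋖ u) (hx : w ≤ x) : x ⊓ u = w ∨ u ≤ x :=
  (h.eq_or_eq (le_inf hx h.le) inf_le_right).imp id inf_eq_right.1

theorem CovBy.exists_inf_eq [OrderTop α] {B : Finset α} (h : w ⋖ u) (hB : B.inf id = w) :
    ∃ b ∈ B, b ⊓ u = w := by
  by_contra! hne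
  refine h.lt.not_ge ?_
  rw [← hB]
  exact Finset.le_inf fun b hb => (h.inf_eq_or_le (hB ▸ inf_le hb)).resolve_left (hne b hb)

theorem inf_sup_inf_eq_of_le {a b : α} (hx : x ≤ b) : a ⊓ (x ⊔ a ⊓ b) = a ⊓ b :=
  le_antisymm (le_inf inf_le_left (inf_le_right.trans (sup_le hx inf_le_right)))
    (le_inf inf_le_left le_sup_right)

end LatticeLemmas

theorem MeetIrred.infIrred {α : Type*} [Lattice α] [OrderTop α] {m : α} (hm : MeetIrred m) :
    InfIrred m :=
  ⟨fun h => hm.1 (isMax_iff_eq_top.1 h), fun _ _ h => hm.2 _ _ h.symm |>.imp Eq.symm Eq.symm⟩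

section UpperCover

variable {α : Type*} [Lattice α] [BoundedOrder α] [Fintype α] {m x : α}

open scoped Classical in
/-- `m*`: for meet-irreducible `m` this is the unique upper cover of `m`. -/
noncomputable def upperCover (m : α) : α :=
  (univ.filter (m < ·)).inf id

theorem upperCover_le (h : m < x) : upperCover m ≤ x := by
  classical exact inf_le (mem_filter.2 ⟨mem_univ x, h⟩)

theorem le_upperCover_of_forall_lt {c : α} (h : ∀ q, m < q → c ≤ q) : c ≤ upperCover m := by
  classical exact Finset.le_inf fun q hq => h q (mem_filter.1 hq).2

theorem upperCover_le_sup (hx : ¬ x ≤ m) : upperCover m ≤ m ⊔ x :=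
  upperCover_le (left_lt_sup.2 hx)

theorem MeetIrred.lt_upperCover (hm : MeetIrred m) : m < upperCover m := by
  refine lt_of_le_of_ne (le_upperCover_of_forall_lt fun _ => le_of_lt) fun h => ?_
  classical
  obtain ⟨q, hq, rfl⟩ := hm.infIrred.finset_inf_eq h.symm
  exact lt_irrefl _ (mem_filter.1 hq).2

/-- The paper's `κ(m)` is the least element of this set, when there is one. -/
def kappaCandidates (m : α) : Set α :=
  Set.Iic (upperCover m) \ Set.Iic m

theorem MeetIrred.upperCover_mem_kappaCandidates (hm : MeetIrred m) :
    upperCover m ∈ kappaCandidates m :=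
  ⟨le_rfl, hm.lt_upperCover.not_ge⟩

theorem sup_eq_upperCover_of_mem_kappaCandidates (hx : x ∈ kappaCandidates m) :
    m ⊔ x = upperCover m :=
  le_antisymm (sup_le (le_upperCover_of_forall_lt fun _ => le_of_lt) hx.1) (upperCover_le_sup hx.2)

theorem Minimal.le_of_lt_of_kappaCandidates {k y : α} (hk : Minimal (· ∈ kappaCandidates m) k)
    (hy : y < k) : y ≤ m := by
  by_contra hym
  exact hk.not_lt ⟨hy.le.trans hk.prop.1, hym⟩ hy

theorem JoinSemidistrib.exists_isLeast_kappaCandidates (hjsd : JoinSemidistrib α)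
    (hm : MeetIrred m) : ∃ k, IsLeast (kappaCandidates m) k := by
  classical
  set s := univ.filter (· ∈ kappaCandidates m)
  have hs : s.Nonempty := ⟨_, mem_filter.2 ⟨mem_univ _, hm.upperCover_mem_kappaCandidates⟩⟩
  have hsup : m ⊔ s.inf' hs id = upperCover m :=
    inf'_induction hs id (fun a ha b hb => (hjsd m a b (ha.trans hb.symm)).trans ha)
      fun x hx => sup_eq_upperCover_of_mem_kappaCandidates (mem_filter.1 hx).2
  refine ⟨s.inf' hs id, ⟨hsup ▸ le_sup_right, fun h => ?_⟩, fun x hx => inf'_le id ?_⟩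
  · exact hm.lt_upperCover.ne (hsup ▸ (sup_eq_left.2 h).symm)
  · exact mem_filter.2 ⟨mem_univ x, hx⟩

theorem joinSemidistrib_of_forall_exists_isLeast
    (h : ∀ m : α, MeetIrred m → ∃ k, IsLeast (kappaCandidates m) k) : JoinSemidistrib α := by
  intro x y z hxyz
  by_contra hne
  obtain ⟨m, -, hmax⟩ := (Set.toFinite {m | x ⊔ y ⊓ z ≤ m ∧ ¬ x ⊔ y ≤ m}).exists_le_maximal
    (a := x ⊔ y ⊓ z) ⟨le_rfl, fun hle => hne (le_antisymm (sup_le_sup_left inf_le_left x) hle)⟩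
  have hxym : ¬ x ⊔ y ≤ m := hmax.prop.2
  have habove : ∀ q, m < q → x ⊔ y ≤ q := fun q hq => by
    by_contra hq'
    exact hmax.not_gt ⟨hmax.prop.1.trans hq.le, hq'⟩ hq
  have hirr : MeetIrred m := by
    refine ⟨fun htop => hxym (htop ▸ le_top), fun a b hab => ?_⟩
    by_contra! hne
    exact hxym (hab ▸ le_inf (habove a (hab ▸ inf_le_left |>.lt_of_ne hne.1))
      (habove b (hab ▸ inf_le_right |>.lt_of_ne hne.2)))
  have hcover : x ⊔ y ≤ upperCover m := le_upperCover_of_forall_lt habove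
  have hxm : x ≤ m := le_sup_left.trans hmax.prop.1
  have hy : y ∈ kappaCandidates m :=
    ⟨le_sup_right.trans hcover, fun hym => hxym (sup_le hxm hym)⟩
  have hz : z ∈ kappaCandidates m :=
    ⟨le_sup_right.trans (hxyz ▸ hcover), fun hzm => hxym (hxyz ▸ sup_le hxm hzm)⟩
  obtain ⟨k, hk⟩ := h m hirr
  exact hk.1.2 ((le_inf (hk.2 hy) (hk.2 hz)).trans (le_sup_right.trans hmax.prop.1))

end UpperCover

section CanonicalMeetand

variable {α : Type*} [Lattice α] [BoundedOrder α] [Fintype α] {m w u x k : α}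

open scoped Classical in
/-- Meet-semidistributivity makes this the largest `x` with `x ⊓ u = w`. -/
noncomputable def canonicalMeetand (w u : α) : α :=
  (univ.filter (· ⊓ u = w)).sup id

theorem le_canonicalMeetand (h : x ⊓ u = w) : x ≤ canonicalMeetand w u := by
  classical exact le_sup (f := id) (mem_filter.2 ⟨mem_univ x, h⟩)

theorem MeetSemidistrib.canonicalMeetand_inf (hmsd : MeetSemidistrib α) (hwu : w ≤ u) :
    canonicalMeetand w u ⊓ u = w := by
  classical
  have hs : (univ.filter (· ⊓ u = w)).Nonempty := ⟨w, mem_filter.2 ⟨mem_univ w, inf_eq_left.2 hwu⟩⟩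
  rw [canonicalMeetand, ← sup'_eq_sup hs]
  refine sup'_induction (p := (· ⊓ u = w)) hs id (fun a ha b hb => ?_)
    fun x hx => (mem_filter.1 hx).2
  rw [inf_comm, hmsd u a b (by rw [inf_comm, ha, inf_comm, hb]), inf_comm, ha]

theorem CovBy.le_of_not_le_canonicalMeetand (h : w ⋖ u) (hx : w ≤ x)
    (hxa : ¬ x ≤ canonicalMeetand w u) : u ≤ x :=
  (h.inf_eq_or_le hx).resolve_left fun he => hxa (le_canonicalMeetand he)

theorem CovBy.mem_kappaCandidates (hmsd : MeetSemidistrib α) (h : w ⋖ u) :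
    u ∈ kappaCandidates (canonicalMeetand w u) := by
  have hwa : w ≤ canonicalMeetand w u := le_canonicalMeetand (inf_eq_left.2 h.le)
  refine ⟨le_upperCover_of_forall_lt fun q hq =>
    h.le_of_not_le_canonicalMeetand (hwa.trans hq.le) hq.not_ge, fun hua => ?_⟩
  exact h.lt.ne' ((inf_eq_right.2 hua).symm.trans (hmsd.canonicalMeetand_inf h.le))

theorem CovBy.meetIrred_canonicalMeetand (hmsd : MeetSemidistrib α) (h : w ⋖ u) :
    MeetIrred (canonicalMeetand w u) := by
  have hu := h.mem_kappaCandidates hmsd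
  refine ⟨fun htop => hu.2 (htop ▸ le_top), fun a b hab => ?_⟩
  by_contra! hne
  refine hu.2 (hab ▸ le_inf ?_ ?_)
  · exact hu.1.trans (upperCover_le ((hab ▸ inf_le_left).lt_of_ne hne.1))
  · exact hu.1.trans (upperCover_le ((hab ▸ inf_le_right).lt_of_ne hne.2))

open scoped Classical in
noncomputable def canonicalMeetSet (w : α) : Finset α :=
  univ.filter fun a => ∃ u, w ⋖ u ∧ a = canonicalMeetand w u

theorem mem_canonicalMeetSet {a : α} :
    a ∈ canonicalMeetSet w ↔ ∃ u, w ⋖ u ∧ a = canonicalMeetand w u := by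
  classical simp [canonicalMeetSet]

theorem le_or_le_of_mem_canonicalMeetSet {a y : α} (ha : a ∈ canonicalMeetSet (x ⊓ y)) :
    x ≤ a ∨ y ≤ a := by
  obtain ⟨u, hu, rfl⟩ := mem_canonicalMeetSet.1 ha
  by_contra! hxy
  exact hu.lt.not_ge (le_inf (hu.le_of_not_le_canonicalMeetand inf_le_left hxy.1)
    (hu.le_of_not_le_canonicalMeetand inf_le_right hxy.2))

theorem MeetSemidistrib.inf_canonicalMeetSet (hmsd : MeetSemidistrib α) (w : α) :
    (canonicalMeetSet w).inf id = w := by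
  have hle : w ≤ (canonicalMeetSet w).inf id := Finset.le_inf fun a ha => by
    obtain ⟨u, hu, rfl⟩ := mem_canonicalMeetSet.1 ha
    exact le_canonicalMeetand (inf_eq_left.2 hu.le)
  refine ((lt_or_eq_of_le hle).resolve_left fun hlt => ?_).symm
  obtain ⟨u, hu, hule⟩ := exists_covBy_le_of_lt hlt
  exact (hu.mem_kappaCandidates hmsd).2
    (hule.trans (inf_le (mem_canonicalMeetSet.2 ⟨u, hu, rfl⟩)))

theorem MeetSemidistrib.canonicalMeetRep_canonicalMeetSet [DecidableEq α]
    (hmsd : MeetSemidistrib α) (w : α) : CanonicalMeetRep (canonicalMeetSet w) w := by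
  refine ⟨irredMeetRep_iff.2 ⟨hmsd.inf_canonicalMeetSet w, fun a ha => ?_⟩, fun B hB a ha => ?_⟩
  · obtain ⟨u, hu, rfl⟩ := mem_canonicalMeetSet.1 ha
    refine hu.lt.trans_le (Finset.le_inf fun b hb => ?_)
    obtain ⟨hne, hb⟩ := mem_erase.1 hb
    obtain ⟨u', hu', rfl⟩ := mem_canonicalMeetSet.1 hb
    refine (hu'.inf_eq_or_le hu.le).elim le_canonicalMeetand fun hu'u => ?_
    obtain rfl : u' = u := (hu.eq_or_eq hu'.le hu'u).resolve_left hu'.lt.ne'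
    exact absurd rfl hne
  · obtain ⟨u, hu, rfl⟩ := mem_canonicalMeetSet.1 ha
    obtain ⟨b, hb, hbu⟩ := hu.exists_inf_eq hB.1
    exact ⟨b, hb, le_canonicalMeetand hbu⟩

theorem MeetSemidistrib.eq_canonicalMeetSet [DecidableEq α] (hmsd : MeetSemidistrib α)
    {A : Finset α} (hA : CanonicalMeetRep A w) : A = canonicalMeetSet w :=
  hA.unique (hmsd.canonicalMeetRep_canonicalMeetSet w)

theorem MeetSemidistrib.meetsCanonically_of_subset [DecidableEq α] (hmsd : MeetSemidistrib α)
    {D : Finset α} (hD : D ⊆ canonicalMeetSet w) : MeetsCanonically D := by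
  have hA := hmsd.canonicalMeetRep_canonicalMeetSet w
  refine ⟨hA.1.subset hD, fun B hB d hd => ?_⟩
  obtain ⟨u, hu, rfl⟩ := mem_canonicalMeetSet.1 (hD hd)
  have hBw : (B ∪ canonicalMeetSet w \ D).inf id = w := by
    rw [inf_union, hB.1, ← inf_union, union_sdiff_of_subset hD, hA.1.1]
  obtain ⟨b, hb, hbu⟩ := hu.exists_inf_eq hBw
  refine (mem_union.1 hb).elim (fun hb => ⟨b, hb, le_canonicalMeetand hbu⟩) fun hb => ?_
  obtain ⟨hbA, hbD⟩ := mem_sdiff.1 hb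
  exact absurd (hA.1.eq_of_le hbA (hD hd) (le_canonicalMeetand hbu) ▸ hd) hbD

end CanonicalMeetand

section Flag

variable {α : Type*} [Lattice α] [BoundedOrder α] [Fintype α] {m w u x k : α}

theorem MeetSemidistrib.le_inf_of_inf_eq_inf (hmsd : MeetSemidistrib α) (hxm : ¬ x ≤ m)
    (h : u ⊓ x = u ⊓ m) (hku : k ≤ u) (hk : k ≤ upperCover m) : k ≤ u ⊓ x :=
  hmsd u x m h ▸ le_inf hku (hk.trans (sup_comm m x ▸ upperCover_le_sup hxm))

theorem MeetSemidistrib.covBy_sup_of_minimal (hmsd : MeetSemidistrib α)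
    (hk : Minimal (· ∈ kappaCandidates m) k) (hw : m ⊓ (k ⊔ w) = w) : w ⋖ k ⊔ w := by
  have hwm : w ≤ m := hw ▸ inf_le_left
  have hkm : ¬ k ≤ m := hk.prop.2
  refine ⟨right_lt_sup.2 fun hkw => hkm (hkw.trans hwm), fun t hwt htk => ?_⟩
  have htm : ¬ t ≤ m := fun htm => hwt.not_ge (hw ▸ le_inf htm htk.le)
  have hkt : ¬ k ≤ t := fun hkt => htk.not_ge (sup_le hkt hwt.le)
  have hinf_eq : ∀ y, w ≤ y → k ⊓ y ≤ m → k ⊓ y ≤ k ⊔ w → k ⊓ y = k ⊓ w := fun y hwy hm hkw =>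
    le_antisymm (le_inf inf_le_left (hw ▸ le_inf hm hkw)) (inf_le_inf_left k hwy)
  have heq : k ⊓ t = k ⊓ m := by
    rw [hinf_eq t hwt.le (hk.le_of_lt_of_kappaCandidates (inf_lt_left.2 hkt))
        (inf_le_right.trans htk.le),
      hinf_eq m hwm inf_le_right (inf_le_left.trans le_sup_left)]
  exact hkt (le_inf_iff.1 (hmsd.le_inf_of_inf_eq_inf htm heq le_rfl hk.prop.1)).2

theorem MeetSemidistrib.mem_canonicalMeetSet_of_minimal (hmsd : MeetSemidistrib α)
    (hk : Minimal (· ∈ kappaCandidates m) k) (hw : m ⊓ (k ⊔ w) = w) :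
    m ∈ canonicalMeetSet w := by
  have hcov := hmsd.covBy_sup_of_minimal hk hw
  refine mem_canonicalMeetSet.2 ⟨k ⊔ w, hcov, le_antisymm (le_canonicalMeetand hw) ?_⟩
  by_contra ham
  have hinf : (k ⊔ w) ⊓ canonicalMeetand w (k ⊔ w) = w :=
    inf_comm (k ⊔ w) _ ▸ hmsd.canonicalMeetand_inf hcov.le
  have hk_le := hmsd.le_inf_of_inf_eq_inf ham (by rw [hinf, inf_comm, hw]) le_sup_left hk.prop.1
  exact hk.prop.2 ((hk_le.trans_eq hinf).trans (hw ▸ inf_le_left))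

variable [DecidableEq α]

theorem MeetSemidistrib.meetsCanonically_pair (hmsd : MeetSemidistrib α) {a : α}
    (hk : Minimal (· ∈ kappaCandidates m) k) (hka : k ≤ a) (hu : u ∈ kappaCandidates a)
    (hum : u ≤ m) : MeetsCanonically ({m, a} : Finset α) := by
  obtain ⟨l, hlu, hl⟩ := (Set.toFinite (kappaCandidates a)).exists_le_minimal hu
  refine hmsd.meetsCanonically_of_subset (w := m ⊓ a)
    (insert_subset_iff.2 ⟨?_, singleton_subset_iff.2 ?_⟩)
  · exact hmsd.mem_canonicalMeetSet_of_minimal hk (inf_sup_inf_eq_of_le hka)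
  · rw [inf_comm]
    exact hmsd.mem_canonicalMeetSet_of_minimal hl (inf_sup_inf_eq_of_le (hlu.trans hum))

theorem MeetSemidistrib.minimal_kappaCandidates_le (hmsd : MeetSemidistrib α)
    (hflag : FlagCanonicalMeetComplex α) (hm : MeetIrred m) {k₁ k₂ : α}
    (hk₁ : Minimal (· ∈ kappaCandidates m) k₁) (hk₂ : Minimal (· ∈ kappaCandidates m) k₂) :
    k₁ ≤ k₂ := by
  classical
  by_contra h12
  have hvm : k₁ ⊓ k₂ ≤ m := hk₁.le_of_lt_of_kappaCandidates (inf_lt_left.2 h12)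
  set A := canonicalMeetSet (k₁ ⊓ k₂)
  have hAm : ∀ a ∈ A, ¬ a ≤ m := fun a ha ham => (le_or_le_of_mem_canonicalMeetSet ha).elim
    (fun h => hk₁.prop.2 (h.trans ham)) fun h => hk₂.prop.2 (h.trans ham)
  set B := A.filter (¬ m ≤ ·)
  have hBA : B ⊆ A := filter_subset _ _
  have hF : (insert m B).inf id = k₁ ⊓ k₂ := by
    refine le_antisymm ((Finset.le_inf fun a ha => ?_).trans_eq (hmsd.inf_canonicalMeetSet _))
      (Finset.le_inf fun a ha => ?_)
    · by_cases hma : m ≤ a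
      · exact (inf_le (mem_insert_self m B)).trans hma
      · exact inf_le (mem_insert_of_mem (mem_filter.2 ⟨ha, hma⟩))
    · obtain rfl | ha := mem_insert.1 ha
      · exact hvm
      · exact (hmsd.inf_canonicalMeetSet _).ge.trans (inf_le (hBA ha))
  have hpair : ∀ a ∈ B, MeetsCanonically ({m, a} : Finset α) := fun a ha => by
    obtain ⟨haA, hma⟩ := mem_filter.1 ha
    obtain ⟨u, hu, rfl⟩ := mem_canonicalMeetSet.1 haA
    have hum : u ≤ m := hu.le_of_not_le_canonicalMeetand hvm hma
    obtain hka | hka := le_or_le_of_mem_canonicalMeetSet haA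
    · exact hmsd.meetsCanonically_pair hk₁ hka (hu.mem_kappaCandidates hmsd) hum
    · exact hmsd.meetsCanonically_pair hk₂ hka (hu.mem_kappaCandidates hmsd) hum
  have hcanon := hflag (insert m B) (fun a ha => ?_) (fun a ha b hb hab => ?_)
  · have hFA := hmsd.eq_canonicalMeetSet hcanon
    rw [hF] at hFA
    exact hAm m (hFA.subset (mem_insert_self m B)) le_rfl
  · obtain rfl | ha := mem_insert.1 ha
    · exact hm
    · obtain ⟨u, hu, rfl⟩ := mem_canonicalMeetSet.1 (hBA ha)
      exact hu.meetIrred_canonicalMeetand hmsd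
  · obtain rfl | ha := mem_insert.1 ha <;> obtain rfl | hb := mem_insert.1 hb
    · exact absurd rfl hab
    · exact hpair b hb
    · exact pair_comm b a ▸ hpair a ha
    · exact hmsd.meetsCanonically_of_subset
        (insert_subset_iff.2 ⟨hBA ha, singleton_subset_iff.2 (hBA hb)⟩)

theorem MeetSemidistrib.exists_isLeast_of_flag (hmsd : MeetSemidistrib α)
    (hflag : FlagCanonicalMeetComplex α) (hm : MeetIrred m) :
    ∃ k, IsLeast (kappaCandidates m) k := by
  obtain ⟨k, hk⟩ := (Set.toFinite (kappaCandidates m)).exists_minimal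
    ⟨_, hm.upperCover_mem_kappaCandidates⟩
  refine ⟨k, hk.prop, fun x hx => ?_⟩
  obtain ⟨k', hk'x, hk'⟩ := (Set.toFinite _).exists_le_minimal hx
  exact (hmsd.minimal_kappaCandidates_le hflag hm hk hk').trans hk'x

theorem MeetSemidistrib.le_of_meetsCanonically_pair (hmsd : MeetSemidistrib α) {m' : α}
    (hk : IsLeast (kappaCandidates m) k) (hne : m ≠ m')
    (hp : MeetsCanonically ({m, m'} : Finset α)) : k ≤ m' := by
  have hA := hmsd.eq_canonicalMeetSet hp
  rw [show ({m, m'} : Finset α).inf id = m ⊓ m' by simp] at hA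
  obtain ⟨u, hu, hmu⟩ := mem_canonicalMeetSet.1 (hA ▸ mem_insert_self m {m'})
  have hm'm : ¬ m' ≤ m := fun h => hne (hp.1.eq_of_le (by simp) (by simp) h).symm
  have hum : u ∈ kappaCandidates m := hmu ▸ hu.mem_kappaCandidates hmsd
  exact (hk.2 hum).trans (hu.le_of_not_le_canonicalMeetand inf_le_right (hmu ▸ hm'm))

theorem MeetSemidistrib.flag_of_forall_exists_isLeast (hmsd : MeetSemidistrib α)
    (h : ∀ m : α, MeetIrred m → ∃ k, IsLeast (kappaCandidates m) k) :
    FlagCanonicalMeetComplex α := by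
  intro F hirr hpair
  refine hmsd.meetsCanonically_of_subset (w := F.inf id) fun m hm => ?_
  obtain ⟨k, hk⟩ := h m (hirr m hm)
  have hkF : k ≤ (F.erase m).inf id := Finset.le_inf fun m' hm' =>
    have hne := (ne_of_mem_erase hm').symm
    hmsd.le_of_meetsCanonically_pair hk hne (hpair m hm m' (mem_of_mem_erase hm') hne)
  refine hmsd.mem_canonicalMeetSet_of_minimal hk.minimal ?_
  rw [inf_id_eq_inf_inf_erase hm]
  exact inf_sup_inf_eq_of_le hkF

end Flag

/-- Corollary (meet version of Theorem 1): a finite meet-semidistributive lattice has flag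
canonical meet complex iff it is semidistributive. -/
theorem stmt_16 {α : Type*} [Lattice α] [BoundedOrder α] [Fintype α] [DecidableEq α]
    (hmsd : MeetSemidistrib α) :
    FlagCanonicalMeetComplex α ↔ (JoinSemidistrib α ∧ MeetSemidistrib α) :=
  ⟨fun hflag => ⟨joinSemidistrib_of_forall_exists_isLeast fun _ hm =>
      hmsd.exists_isLeast_of_flag hflag hm, hmsd⟩,
    fun ⟨hjsd, _⟩ => hmsd.flag_of_forall_exists_isLeast fun _ hm =>
      hjsd.exists_isLeast_kappaCandidates hm⟩
end

section
/- Let L be a finite semidistributive lattice with exactly n join-irreducible elements, and suppose that every two-element set of join-irreducible elements of L is a face of the canonical join complex (i.e., the canonical join graph of L is the complete graph K_n). Then L is order-isomorphic to the Boolean lattice of all subsets of an n-element set, ordered by inclusion. -/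
universe u v

section Aux

variable {α : Type*} [Lattice α] [OrderBot α]

/-- An atom is join-irreducible. -/
lemma joinIrred_of_isAtom {a : α} (ha : IsAtom a) : JoinIrred a := by
  refine ⟨ha.1, fun x y hxy => ?_⟩
  rcases (ha.le_iff.mp (hxy ▸ le_sup_left)) with hx | hx
  · rcases (ha.le_iff.mp (hxy ▸ le_sup_right)) with hy | hy
    · exact absurd (by rw [hxy, hx, hy, sup_idem]) ha.1
    · exact Or.inr hy.symm
  · exact Or.inl hx.symm

/-- If all pairs of distinct join-irreducibles join canonically, join-irreducibles
form an antichain. -/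
lemma antichain_of_pairs
    [DecidableEq α]
    (hpairs : ∀ j j' : α, JoinIrred j → JoinIrred j' → j ≠ j' →
      JoinsCanonically ({j, j'} : Finset α))
    {j j' : α} (hj : JoinIrred j) (hj' : JoinIrred j') (hne : j ≠ j') :
    ¬ j ≤ j' := by
  intro hle
  have h := hpairs j j' hj hj' hne
  have hss : ({j'} : Finset α) ⊂ {j, j'} := by
    constructor
    · intro x hx; simp at hx; simp [hx]
    · intro hsub
      have := hsub (by simp : j ∈ ({j, j'} : Finset α))
      simp at this
      exact hne this
  have hlt := h.1.2 {j'} hss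
  simp [Finset.sup_insert, sup_eq_right.mpr hle] at hlt

/-- In a meet-semidistributive lattice, an element disjoint from each member of a
finite set is disjoint from the sup. -/
lemma inf_sup_eq_bot {β : Type*} (msd : MeetSemidistrib α) (j : α)
    (S : Finset β) (f : β → α) (h : ∀ s ∈ S, j ⊓ f s = ⊥) :
    j ⊓ S.sup f = ⊥ := by
  classical
  revert h
  induction S using Finset.induction_on with
  | empty => intro h; simp
  | @insert a S ha ih =>
      intro h
      rw [Finset.sup_insert]
      have h1 : j ⊓ f a = ⊥ := h a (Finset.mem_insert_self a S)
      have h2 : j ⊓ S.sup f = ⊥ := ih (fun s hs => h s (Finset.mem_insert_of_mem hs))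
      have h3 := msd j (f a) (S.sup f) (h1.trans h2.symm)
      rw [h3, h1]

end Aux

/-- Proposition (Boolean): a finite semidistributive lattice with exactly `n` join-irreducible
elements whose canonical join graph is the complete graph `K_n` is isomorphic to the Boolean
lattice of subsets of an `n`-element set. -/
theorem stmt_17 {α : Type*} [Lattice α] [OrderBot α] [Fintype α] [DecidableEq α]
    (n : ℕ) (hsd : JoinSemidistrib α ∧ MeetSemidistrib α)
    (hcard : Nat.card {j : α // JoinIrred j} = n)
    (hpairs : ∀ j j' : α, JoinIrred j → JoinIrred j' → j ≠ j' →
      JoinsCanonically ({j, j'} : Finset α)) :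
    Nonempty (α ≃o Finset (Fin n)) := by

  classical
  obtain ⟨-, msd⟩ := hsd
  -- join-irreducibles form an antichain
  have hanti : ∀ j j' : α, JoinIrred j → JoinIrred j' → j ≠ j' → ¬ j ≤ j' :=
    fun j j' hj hj' hne => antichain_of_pairs hpairs hj hj' hne
  -- every join-irreducible is an atom
  have hatom : ∀ j : α, JoinIrred j → IsAtom j := by
    intro j hj
    obtain ⟨a, ha, hale⟩ := (eq_bot_or_exists_atom_le j).resolve_left hj.1
    have haji : JoinIrred a := joinIrred_of_isAtom ha
    by_cases hne : a = j
    · exact hne ▸ ha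
    · exact absurd hale (hanti a j haji hj hne)
  -- distinct join-irreducibles are disjoint
  have hdisj : ∀ j j' : α, JoinIrred j → JoinIrred j' → j ≠ j' → j ⊓ j' = ⊥ := by
    intro j j' hj hj' hne
    rcases (hatom j hj).le_iff.mp (inf_le_left : j ⊓ j' ≤ j) with h | h
    · exact h
    · exact absurd (h ▸ (inf_le_right : j ⊓ j' ≤ j')) (hanti j j' hj hj' hne)
  -- the set of join-irreducibles below w
  set F : α → Finset α := fun w => Finset.univ.filter (fun j => JoinIrred j ∧ j ≤ w) with hF
  have hmemF : ∀ j w : α, j ∈ F w ↔ JoinIrred j ∧ j ≤ w := by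
    intro j w; simp [hF]
  -- every element is the sup of the join-irreducibles below it
  have hsup : ∀ w : α, (F w).sup id = w := by
    have hle : ∀ w : α, (F w).sup id ≤ w := by
      intro w
      exact Finset.sup_le fun j hj => ((hmemF j w).mp hj).2
    have hmono : ∀ v w : α, v ≤ w → (F v).sup id ≤ (F w).sup id := by
      intro v w hvw
      refine Finset.sup_le fun j hj => ?_
      obtain ⟨hji, hjv⟩ := (hmemF j v).mp hj
      exact Finset.le_sup ((hmemF j w).mpr ⟨hji, hjv.trans hvw⟩)
    have hge : ∀ w : α, w ≤ (F w).sup id := by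
      intro w
      refine wellFounded_lt.induction (C := fun w => w ≤ (F w).sup id) w ?_
      clear w; intro w ih
      · by_cases hbot : w = ⊥
        · simp [hbot]
        by_cases hji : JoinIrred w
        · exact Finset.le_sup (f := id) ((hmemF w w).mpr ⟨hji, le_rfl⟩)
        · rw [JoinIrred, not_and_or] at hji
          rcases hji with h | h
          · exact absurd (not_not.mp h) hbot
          · push_neg at h
            obtain ⟨a, b, hab, ha, hb⟩ := h
            have haw : a < w := lt_of_le_of_ne (hab ▸ le_sup_left) fun he => ha he.symm
            have hbw : b < w := lt_of_le_of_ne (hab ▸ le_sup_right) fun he => hb he.symm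
            calc w = a ⊔ b := hab
              _ ≤ (F a).sup id ⊔ (F b).sup id :=
                  sup_le_sup ((ih a haw).trans le_rfl) ((ih b hbw).trans le_rfl)
              _ ≤ (F w).sup id :=
                  sup_le (hmono a w haw.le) (hmono b w hbw.le)
    exact fun w => le_antisymm (hle w) (hge w)
  -- the map into finsets of join-irreducibles
  set J := {j : α // JoinIrred j} with hJ
  set φ : α → Finset J := fun w => Finset.univ.filter (fun j : J => j.1 ≤ w) with hφ
  have hmemφ : ∀ (j : J) (w : α), j ∈ φ w ↔ j.1 ≤ w := by
    intro j w; simp [hφ]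
  have hrel : ∀ v w : α, φ v ⊆ φ w ↔ v ≤ w := by
    intro v w
    constructor
    · intro hsub
      calc v = (F v).sup id := (hsup v).symm
        _ ≤ w := by
          refine Finset.sup_le fun j hj => ?_
          obtain ⟨hji, hjv⟩ := (hmemF j v).mp hj
          exact (hmemφ ⟨j, hji⟩ w).mp (hsub ((hmemφ ⟨j, hji⟩ v).mpr hjv))
    · intro hvw j hj
      exact (hmemφ j w).mpr (((hmemφ j v).mp hj).trans hvw)
  have hinj : Function.Injective φ := by
    intro v w hvw
    exact le_antisymm ((hrel v w).mp hvw.le) ((hrel w v).mp hvw.ge)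
  have hsurj : Function.Surjective φ := by
    intro S
    refine ⟨S.sup (fun j : J => j.1), ?_⟩
    ext j
    rw [hmemφ]
    constructor
    · intro hjle
      by_contra hjS
      have hbot : j.1 ⊓ S.sup (fun s : J => s.1) = ⊥ := by
        refine inf_sup_eq_bot msd j.1 S _ fun s hs => ?_
        refine hdisj j.1 s.1 j.2 s.2 fun he => hjS ?_
        exact (Subtype.ext he) ▸ hs
      exact j.2.1 (by rw [← inf_eq_left.mpr hjle, hbot])
    · intro hjS
      exact Finset.le_sup hjS
  -- assemble the order isomorphism
  have hcardJ : Fintype.card J = n := by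
    rw [← Nat.card_eq_fintype_card]; exact hcard
  let e : J ≃ Fin n := Fintype.equivFinOfCardEq hcardJ
  let iso1 : α ≃o Finset J :=
    { toEquiv := Equiv.ofBijective φ ⟨hinj, hsurj⟩
      map_rel_iff' := fun {v w} => hrel v w }
  let iso2 : Finset J ≃o Finset (Fin n) :=
    { toEquiv := e.finsetCongr
      map_rel_iff' := fun {s t} => by
        simp [Equiv.finsetCongr_apply, Finset.map_subset_map, Finset.le_iff_subset] }
  exact ⟨iso1.trans iso2⟩
end

section
/- Let L be a finite lattice with bottom element ⊥ and let m be a positive integer. Consider the lattice L^[m] of m-multichains of L, i.e., monotone functions from the m-element chain {1 < 2 < … < m} to L, ordered componentwise (joins and meets are computed componentwise). For a join-irreducible element j of L and k ∈ {1, …, m}, let (j)_k denote the multichain whose i-th entry is ⊥ for i < k and j for i ≥ k. Then the join-irreducible elements of L^[m] are exactly the elements (j)_k with j join-irreducible in L and k ∈ {1, …, m}. -/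
universe u v

/-- The multichain `(j)_k` in `L^[m]`: entries `⊥` below index `k` and `j` from `k` on. -/
def multichainJK {α : Type*} [Lattice α] [OrderBot α] {m : ℕ} (j : α) (k : Fin m) :
    Fin m →o α :=
  ⟨fun i => if i < k then ⊥ else j, by
    intro i i' h
    dsimp only
    by_cases hi : i < k
    · simp [hi]
    · have hi' : ¬ i' < k := fun hk => hi (lt_of_le_of_lt h hk)
      simp [hi, hi']⟩

/-! Every multichain `f` is the join of the `(f k)_k`, so a join-irreducible `f` is one of them.
For fixed `k`, `j ↦ (j)_k` preserves `⊥` and `⊔` and is inverted by evaluation at `k`, and `(j)_k`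
is the least multichain whose `k`-th entry lies above `j`; together these make `(j)_k`
join-irreducible exactly when `j` is. -/

section Multichain

variable {α : Type*} [Lattice α] [OrderBot α] {m : ℕ}

theorem joinIrred_iff_supIrred {j : α} : JoinIrred j ↔ SupIrred j := by
  rw [SupIrred, isMin_iff_eq_bot, JoinIrred]
  refine and_congr Iff.rfl ⟨fun h a b hab => ?_, fun h a b hab => ?_⟩
  · exact (h a b hab.symm).imp Eq.symm Eq.symm
  · exact (h hab.symm).imp Eq.symm Eq.symm

@[simp]
theorem multichainJK_apply (j : α) (k i : Fin m) :
    multichainJK j k i = if i < k then ⊥ else j := rfl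

theorem multichainJK_apply_self (j : α) (k : Fin m) : multichainJK j k k = j := by
  simp

theorem multichainJK_injective (k : Fin m) : Function.Injective (multichainJK · k : α → _) :=
  fun a b h => by simpa using congrArg (· k) h

@[simp]
theorem multichainJK_bot (k : Fin m) : multichainJK (⊥ : α) k = ⊥ := by
  ext i
  simp

theorem multichainJK_sup (a b : α) (k : Fin m) :
    multichainJK (a ⊔ b) k = multichainJK a k ⊔ multichainJK b k := by
  ext i
  by_cases hik : i < k <;> simp [hik]

theorem multichainJK_le_iff {j : α} {k : Fin m} {f : Fin m →o α} :
    multichainJK j k ≤ f ↔ j ≤ f k := by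
  refine ⟨fun h => multichainJK_apply_self j k ▸ h k, fun h i => ?_⟩
  by_cases hik : i < k
  · simp [hik]
  · simpa [hik] using h.trans (f.monotone (not_lt.mp hik))

theorem finset_sup_multichainJK (f : Fin m →o α) :
    Finset.univ.sup (fun k => multichainJK (f k) k) = f := by
  refine le_antisymm (Finset.sup_le fun k _ => multichainJK_le_iff.mpr le_rfl) fun i => ?_
  calc f i = multichainJK (f i) i i := (multichainJK_apply_self _ _).symm
    _ ≤ _ := Finset.le_sup (f := fun k => multichainJK (f k) k) (Finset.mem_univ i) i

theorem joinIrred_multichainJK_iff {j : α} {k : Fin m} :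
    JoinIrred (multichainJK j k) ↔ JoinIrred j := by
  constructor
  · rintro ⟨hne, hirr⟩
    refine ⟨fun hj => hne (hj ▸ multichainJK_bot k), fun a b hab => ?_⟩
    exact (hirr _ _ (hab ▸ multichainJK_sup a b k)).imp
      (multichainJK_injective k ·) (multichainJK_injective k ·)
  · rintro ⟨hne, hirr⟩
    refine ⟨fun h => hne (multichainJK_injective k (h.trans (multichainJK_bot k).symm)),
      fun a b hab => ?_⟩
    have hle : ∀ c, c ≤ multichainJK j k → j = c k → multichainJK j k = c := fun c hc hjc =>
      le_antisymm (multichainJK_le_iff.mpr hjc.le) hc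
    have hjk : j = a k ⊔ b k := by simpa using congrArg (· k) hab
    exact (hirr _ _ hjk).imp (hle a (hab ▸ le_sup_left)) (hle b (hab ▸ le_sup_right))

end Multichain

theorem stmt_18_general {α : Type*} [Lattice α] [OrderBot α]
    (m : ℕ) :
    ∀ f : Fin m →o α,
      JoinIrred f ↔ ∃ (j : α) (k : Fin m), JoinIrred j ∧ f = multichainJK j k := by
  intro f
  constructor
  · intro hf
    obtain ⟨k, -, hk⟩ := (joinIrred_iff_supIrred.mp hf).finset_sup_eq (finset_sup_multichainJK f)
    exact ⟨f k, k, joinIrred_multichainJK_iff.mp (hk ▸ hf), hk.symm⟩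
  · rintro ⟨j, k, hj, rfl⟩
    exact joinIrred_multichainJK_iff.mpr hj

/-- Proposition (join-irreducibles of the multichain lattice): the join-irreducible elements
of `L^[m]` (monotone maps `Fin m →o L`, ordered componentwise) are exactly the `(j)_k` for
`j` join-irreducible in `L` and `k : Fin m`. -/
theorem stmt_18 {α : Type*} [Lattice α] [OrderBot α] [Fintype α]
    (m : ℕ) (hm : 0 < m) :
    ∀ f : Fin m →o α,
      JoinIrred f ↔ ∃ (j : α) (k : Fin m), JoinIrred j ∧ f = multichainJK j k :=
  stmt_18_general m
end
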